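/- arXiv:1212.6572 — 3 statements merged into one kernel-verified Lean document; each statement's English description precedes it below -/
import Mathlib

section
/- Let n ≥ 2 and let p₁, …, pₙ be positive integers that are pairwise coprime (gcd(pᵢ, pⱼ) = 1 for i ≠ j). Let F = {x ∈ ℝⁿ : xᵢ ≥ 0 for all i, and Σᵢ xᵢ/pᵢ = 1} be the facet of the simplex conv{0, p₁e₁, …, pₙeₙ} not containing the origin. Then lim_{k→∞} #(F ∩ (1/k)ℤⁿ) / k^{n-1} = 1/(n−1)!. -/
/-! Writing a lattice point of `F` as `x = z / k`, clearing denominators gives `∑ zᵢ / pᵢ = k`;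
since the `pᵢ` are pairwise coprime, each `pᵢ` divides `zᵢ`. Hence the points of
`F ∩ (1/k)ℤⁿ` are exactly the `x = (pᵢ mᵢ / k)ᵢ` with `m ∈ ℕⁿ`, `∑ mᵢ = k`, and there are
`C(k + n - 1, n - 1) ~ k^(n-1) / (n-1)!` of them. -/

open Filter Topology Set Function Asymptotics

noncomputable section

theorem dvd_of_dvd_sum_mul_prod_erase {ι R : Type*} [CommRing R] [DecidableEq ι] {s : Finset ι}
    {p z : ι → R} (hcop : (s : Set ι).Pairwise (IsCoprime on p)) {i : ι} (hi : i ∈ s)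
    (h : p i ∣ ∑ j ∈ s, z j * ∏ l ∈ s.erase j, p l) : p i ∣ z i := by
  have hrest : p i ∣ ∑ j ∈ s.erase i, z j * ∏ l ∈ s.erase j, p l :=
    Finset.dvd_sum fun j hj => (Finset.dvd_prod_of_mem p
      (Finset.mem_erase.2 ⟨(Finset.ne_of_mem_erase hj).symm, hi⟩)).mul_left _
  rw [← Finset.add_sum_erase s _ hi] at h
  have hcop_i : IsCoprime (p i) (∏ l ∈ s.erase i, p l) :=
    IsCoprime.prod_right fun l hl =>
      hcop hi (Finset.mem_of_mem_erase hl) (Finset.ne_of_mem_erase hl).symm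
  exact hcop_i.dvd_of_dvd_mul_right ((dvd_add_left hrest).1 h)

theorem Int.dvd_of_sum_div_eq_intCast {ι K : Type*} [Fintype ι] [Field K] [CharZero K]
    {p z : ι → ℤ} (hp : ∀ i, p i ≠ 0) (hcop : Pairwise (IsCoprime on p)) {c : ℤ}
    (h : ∑ i, (z i : K) / p i = c) (i : ι) : p i ∣ z i := by
  classical
  refine dvd_of_dvd_sum_mul_prod_erase (s := Finset.univ) (fun a _ b _ hab => hcop hab)
    (Finset.mem_univ i) ⟨c * ∏ l ∈ Finset.univ.erase i, p l, ?_⟩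
  have hcast : ∑ j, (z j : K) * ∏ l ∈ Finset.univ.erase j, (p l : K) = c * ∏ l, (p l : K) := by
    rw [← h, Finset.sum_mul]
    refine Finset.sum_congr rfl fun j _ => ?_
    rw [← Finset.mul_prod_erase _ _ (Finset.mem_univ j)]
    have := hp j
    field_simp
  rw [← Finset.mul_prod_erase _ _ (Finset.mem_univ i), mul_left_comm] at hcast
  exact_mod_cast hcast

def facetLatticePoints {ι : Type*} [Fintype ι] (p : ι → ℕ) (k : ℕ) : Set (ι → ℝ) :=
  {x | (∀ i, 0 ≤ x i) ∧ (∑ i, x i / (p i : ℝ)) = 1 ∧ ∀ i, ∃ z : ℤ, x i = (z : ℝ) / k}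

section Facet

variable {ι : Type*} [Fintype ι] {p : ι → ℕ} {k : ℕ}

theorem facetLatticePoints_eq_image (hp : ∀ i, 0 < p i) (hcop : Pairwise (Nat.Coprime on p))
    (hk : 0 < k) :
    facetLatticePoints p k = (fun (m : ι → ℕ) i => (p i * m i : ℝ) / k) '' {m | ∑ i, m i = k} := by
  have hk' : (k : ℝ) ≠ 0 := by positivity
  have hscaled (m : ι → ℕ) : ∑ i, (p i * m i : ℝ) / k / p i = (∑ i, m i : ℕ) / k := by
    push_cast
    rw [Finset.sum_div]
    refine Finset.sum_congr rfl fun i _ => ?_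
    have := hp i
    field_simp
  ext x
  constructor
  · rintro ⟨hnonneg, hsum, hlat⟩
    choose z hz using hlat
    have hzsum : ∑ i, (z i : ℝ) / ((p i : ℤ) : ℝ) = (k : ℤ) := by
      push_cast
      rw [← mul_one (k : ℝ), ← hsum, Finset.mul_sum]
      refine Finset.sum_congr rfl fun i _ => ?_
      rw [hz i]
      field_simp
    have hdvd := Int.dvd_of_sum_div_eq_intCast (fun i => by have := hp i; positivity)
      (fun i j hij => Nat.isCoprime_iff_coprime.2 (hcop hij)) hzsum
    choose w hw using hdvd
    have hw0 : ∀ i, 0 ≤ w i := fun i => by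
      have hzi : (0 : ℝ) ≤ z i := by
        rw [← div_mul_cancel₀ (z i : ℝ) hk', ← hz i]
        exact mul_nonneg (hnonneg i) k.cast_nonneg
      rw [hw i] at hzi
      exact nonneg_of_mul_nonneg_right (by exact_mod_cast hzi) (by exact_mod_cast hp i)
    lift w to ι → ℕ using hw0
    have hx : x = fun i => (p i * w i : ℝ) / k := funext fun i => by rw [hz i, hw i]; push_cast; rfl
    subst hx
    refine ⟨w, ?_, rfl⟩
    rw [hscaled, div_eq_one_iff_eq hk'] at hsum
    exact_mod_cast hsum
  · rintro ⟨m, hm, rfl⟩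
    refine ⟨fun i => by positivity, ?_, fun i => ⟨p i * m i, by push_cast; ring⟩⟩
    rw [hscaled, hm, div_self hk']

theorem ncard_setOf_sum_eq (k : ℕ) :
    {m : ι → ℕ | ∑ i, m i = k}.ncard = (Fintype.card ι + k - 1).choose k := by
  classical
  rw [← Nat.card_coe_set_eq, Set.coe_ofPred, Nat.card_congr (Sym.equivNatSumOfFintype ι k).symm,
    Nat.card_eq_fintype_card, Sym.card_sym_eq_choose]

theorem ncard_facetLatticePoints (hp : ∀ i, 0 < p i) (hcop : Pairwise (Nat.Coprime on p))
    (hk : 0 < k) :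
    (facetLatticePoints p k).ncard = (Fintype.card ι + k - 1).choose k := by
  rw [facetLatticePoints_eq_image hp hcop hk, ncard_image_of_injective _ ?_, ncard_setOf_sum_eq]
  · intro m m' h
    funext i
    have := hp i
    have hi := congrFun h i
    field_simp at hi
    exact_mod_cast hi

end Facet

theorem tendsto_choose_add_div_pow (m : ℕ) :
    Tendsto (fun k : ℕ => ((k + m).choose m : ℝ) / (k : ℝ) ^ m) atTop
      (𝓝 (1 / m.factorial)) := by
  have hshift : (fun k : ℕ => ((k + m : ℕ) : ℝ)) ~[atTop] fun k => (k : ℝ) := by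
    push_cast
    exact IsEquivalent.refl.add_const_of_norm_tendsto_atTop
      (tendsto_norm_atTop_atTop.comp tendsto_natCast_atTop_atTop)
  have hchoose : (fun k : ℕ => ((k + m).choose m : ℝ)) ~[atTop]
      fun k => (k : ℝ) ^ m / m.factorial :=
    ((isEquivalent_choose m).comp_tendsto (tendsto_add_atTop_nat m)).trans
      ((hshift.pow m).div IsEquivalent.refl)
  have hlim : Tendsto (fun k : ℕ => (k : ℝ) ^ m / m.factorial / (k : ℝ) ^ m) atTop
      (𝓝 (1 / m.factorial)) := by
    refine tendsto_const_nhds.congr' ?_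
    filter_upwards [eventually_gt_atTop 0] with k hk
    field_simp
  exact (hchoose.div IsEquivalent.refl).symm.tendsto_nhds hlim

/-- The number of points of the rescaled lattice `(1/k)ℤⁿ` lying on the facet
`F = {x : xᵢ ≥ 0, Σᵢ xᵢ/pᵢ = 1}` of the simplex `conv{0, p₁e₁, …, pₙeₙ}`, divided by
`k^{n-1}`, tends to `1/(n-1)!` as `k → ∞`. -/
theorem facet_lattice_count (n : ℕ) (hn : 2 ≤ n) (p : Fin n → ℕ) (hp : ∀ i, 0 < p i)
    (hcop : ∀ i j, i ≠ j → Nat.Coprime (p i) (p j)) :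
    Tendsto (fun k : ℕ =>
      (({x : Fin n → ℝ | (∀ i, 0 ≤ x i) ∧ (∑ i, x i / (p i : ℝ)) = 1 ∧
          ∀ i, ∃ z : ℤ, x i = (z : ℝ) / k}.ncard : ℝ)) / (k : ℝ) ^ (n - 1))
      atTop (𝓝 (1 / (Nat.factorial (n - 1) : ℝ))) := by
  obtain ⟨m, rfl⟩ : ∃ m, n = m + 1 := ⟨n - 1, by omega⟩
  rw [Nat.add_sub_cancel]
  refine (tendsto_choose_add_div_pow m).congr' ?_
  filter_upwards [eventually_gt_atTop 0] with k hk
  rw [← facetLatticePoints, ncard_facetLatticePoints hp (fun i j => hcop i j) hk, Fintype.card_fin,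
    show m + 1 + k - 1 = k + m by omega, Nat.choose_symm_add]
end
end

section
/- Let h : [a, b] → ℝ be a convex, continuously differentiable function, let N be a positive even integer, set δ = (b − a)/N and x_j = a + jδ for j = 0, 1, …, N. Then the alternating sum satisfies |Σ_{j=0}^{N} (−1)^j h(x_j) − (h(a) + h(b))/2| ≤ δ · sup_{x ∈ [a,b]} |h'(x)|. -/
/-!
With `d j = h (x (j + 1)) - h (x j)`, twice the alternating sum minus `h a + h b` equals
`∑ k < N/2, (d (2k+1) - d (2k))`. Convexity makes `d` monotone, so this sum lies between `0` and
the telescoped `d (N-1) - d 0`, and the tangent lines of `h` at `a` and `b` give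
`δ h'(a) ≤ d 0` and `d (N-1) ≤ δ h'(b)`. Finally `h'` is monotone on `[a, b]`, so `|h'|` is
bounded there by its values at the endpoints, which keeps the `sSup` from taking its junk value.
-/

open Set Finset
open scoped fwdDiff

theorem two_mul_sum_range_alternating {R : Type*} [CommRing R] (f : ℕ → R) (m : ℕ) :
    2 * ∑ j ∈ range (2 * m + 1), (-1) ^ j * f j =
      f 0 + f (2 * m) + ∑ k ∈ range m, (Δ_[1] f (2 * k + 1) - Δ_[1] f (2 * k)) := by
  induction m with
  | zero => simp; ring
  | succ m ih =>
    rw [show 2 * (m + 1) + 1 = 2 * m + 1 + 1 + 1 by ring, sum_range_succ, sum_range_succ,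
      mul_add, mul_add, ih, sum_range_succ]
    have hsign : (-1 : R) ^ (2 * m) = 1 := by rw [pow_mul, neg_one_sq, one_pow]
    simp only [fwdDiff, pow_succ, hsign]
    ring_nf

section PairedDifferences

variable {α : Type*} [AddCommGroup α] [PartialOrder α] [IsOrderedAddMonoid α]
  {g : ℕ → α} {m : ℕ}

theorem sum_range_pair_sub_nonneg (hg : ∀ j, j + 1 < 2 * m → g j ≤ g (j + 1)) :
    0 ≤ ∑ k ∈ range m, (g (2 * k + 1) - g (2 * k)) :=
  sum_nonneg fun k hk => sub_nonneg.2 <| hg _ (by simp at hk; omega)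

theorem sum_range_pair_sub_le (hg : ∀ j, j + 1 < 2 * m → g j ≤ g (j + 1)) :
    ∑ k ∈ range m, (g (2 * k + 1) - g (2 * k)) ≤ g (2 * m - 1) - g 0 := by
  induction m with
  | zero => simp
  | succ m ih =>
    have hstep : g (2 * m - 1) ≤ g (2 * m) := by
      rcases m with _ | m
      · rfl
      · rw [show 2 * (m + 1) - 1 = 2 * m + 1 by omega]
        exact hg (2 * m + 1) (by omega)
    rw [sum_range_succ, show 2 * (m + 1) - 1 = 2 * m + 1 by omega]
    calc _ ≤ g (2 * m - 1) - g 0 + (g (2 * m + 1) - g (2 * m)) :=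
          add_le_add_left (ih fun j hj => hg j (by omega)) _
      _ ≤ g (2 * m + 1) - g 0 := by
        rw [← sub_nonneg]; convert sub_nonneg.2 hstep using 1; abel

end PairedDifferences

theorem fwdDiff_comp_arithProg {G : Type*} [AddCommGroup G] (f : ℝ → G) (x₀ δ : ℝ) (n : ℕ) :
    Δ_[1] (fun i : ℕ => f (x₀ + i * δ)) n = Δ_[δ] f (x₀ + n * δ) := by
  simp only [fwdDiff, Nat.cast_add, Nat.cast_one, add_mul, one_mul, add_assoc]

theorem add_natCast_mul_div_natCast_self {a b : ℝ} {N : ℕ} (hN : N ≠ 0) :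
    a + N * ((b - a) / N) = b := by
  rw [mul_div_cancel₀ _ (Nat.cast_ne_zero.2 hN)]; ring

theorem add_natCast_mul_mem_Icc {a δ : ℝ} (hδ : 0 ≤ δ) {N j : ℕ} (hj : j ≤ N) :
    a + j * δ ∈ Icc a (a + N * δ) :=
  ⟨le_add_of_nonneg_right (by positivity), by gcongr⟩

theorem ConvexOn.fwdDiff_le_fwdDiff_add {E : Type*} [AddCommGroup E] [Module ℝ E] {s : Set E}
    {f : E → ℝ} (hf : ConvexOn ℝ s f) {x v : E} (hx : x ∈ s) (hxv : x + v + v ∈ s) :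
    Δ_[v] f x ≤ Δ_[v] f (x + v) := by
  have hmid := hf.2 hx hxv (by norm_num : (0 : ℝ) ≤ 1 / 2) (by norm_num : (0 : ℝ) ≤ 1 / 2)
    (by norm_num)
  rw [show (1 / 2 : ℝ) • x + (1 / 2 : ℝ) • (x + v + v) = x + v by module, smul_eq_mul,
    smul_eq_mul] at hmid
  simp only [fwdDiff]
  linarith

namespace ConvexOn

variable {S : Set ℝ} {f : ℝ → ℝ} {x δ f' : ℝ}

theorem fwdDiff_comp_arithProg_le_succ (hf : ConvexOn ℝ S f) {n : ℕ} (hn : x + n * δ ∈ S)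
    (hn₂ : x + (n + 2 : ℕ) * δ ∈ S) :
    Δ_[1] (fun i : ℕ => f (x + i * δ)) n ≤ Δ_[1] (fun i : ℕ => f (x + i * δ)) (n + 1) := by
  rw [fwdDiff_comp_arithProg, fwdDiff_comp_arithProg,
    show x + (n + 1 : ℕ) * δ = x + n * δ + δ by push_cast; ring]
  exact hf.fwdDiff_le_fwdDiff_add hn (by convert hn₂ using 1; push_cast; ring)

theorem mul_le_fwdDiff_of_hasDerivWithinAt (hf : ConvexOn ℝ S f) (hx : x ∈ S) (hxδ : x + δ ∈ S)
    (hδ : 0 ≤ δ) (hf' : HasDerivWithinAt f f' S x) : f' * δ ≤ Δ_[δ] f x := by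
  rcases hδ.eq_or_lt with rfl | hδ
  · simp [fwdDiff]
  have := hf.le_slope_of_hasDerivWithinAt hx hxδ (lt_add_of_pos_right x hδ) hf'
  rwa [slope_def_field, add_sub_cancel_left, le_div_iff₀ hδ] at this

theorem fwdDiff_le_mul_of_hasDerivWithinAt (hf : ConvexOn ℝ S f) (hx : x ∈ S) (hxδ : x + δ ∈ S)
    (hδ : 0 ≤ δ) (hf' : HasDerivWithinAt f f' S (x + δ)) : Δ_[δ] f x ≤ f' * δ := by
  rcases hδ.eq_or_lt with rfl | hδ
  · simp [fwdDiff]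
  have := hf.slope_le_of_hasDerivWithinAt hx hxδ (lt_add_of_pos_right x hδ) hf'
  rwa [slope_def_field, add_sub_cancel_left, div_le_iff₀ hδ] at this

theorem monotoneOn_of_hasDerivWithinAt {f' : ℝ → ℝ} (hf : ConvexOn ℝ S f)
    (hd : ∀ x ∈ S, HasDerivWithinAt f (f' x) S x) : MonotoneOn f' S := by
  intro x hx y hy hxy
  rcases hxy.eq_or_lt with rfl | hxy
  · rfl
  exact (hf.le_slope_of_hasDerivWithinAt hx hy hxy (hd x hx)).trans
    (hf.slope_le_of_hasDerivWithinAt hx hy hxy (hd y hy))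

end ConvexOn

theorem MonotoneOn.bddAbove_abs_image_Icc {f : ℝ → ℝ} {a b : ℝ} (hf : MonotoneOn f (Icc a b)) :
    BddAbove ((fun x => |f x|) '' Icc a b) := by
  refine ⟨max |f a| |f b|, ?_⟩
  rintro _ ⟨x, hx, rfl⟩
  have hab : a ≤ b := hx.1.trans hx.2
  exact abs_le_max_abs_abs (hf ⟨le_rfl, hab⟩ hx hx.1) (hf hx ⟨hab, le_rfl⟩ hx.2)

theorem ConvexOn.sum_range_pair_fwdDiff_mem_Icc {a b δ da db : ℝ} {h : ℝ → ℝ} {m : ℕ}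
    (hconv : ConvexOn ℝ (Icc a b) h) (hda : HasDerivWithinAt h da (Icc a b) a)
    (hdb : HasDerivWithinAt h db (Icc a b) b) (hδ : 0 ≤ δ) (hm : m ≠ 0)
    (hend : a + (2 * m : ℕ) * δ = b) :
    ∑ k ∈ range m, (Δ_[1] (fun j : ℕ => h (a + j * δ)) (2 * k + 1) -
      Δ_[1] (fun j : ℕ => h (a + j * δ)) (2 * k)) ∈ Icc 0 ((db - da) * δ) := by
  set f : ℕ → ℝ := fun j => h (a + j * δ)
  have hmem (j : ℕ) (hj : j ≤ 2 * m) : a + j * δ ∈ Icc a b :=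
    hend ▸ add_natCast_mul_mem_Icc hδ hj
  have ha : a ∈ Icc a b := by simpa using hmem 0 (Nat.zero_le _)
  have hb : b ∈ Icc a b := hend ▸ hmem (2 * m) le_rfl
  have hmono (j : ℕ) (hj : j + 1 < 2 * m) : Δ_[1] f j ≤ Δ_[1] f (j + 1) :=
    hconv.fwdDiff_comp_arithProg_le_succ (hmem j (by omega)) (hmem (j + 2) hj)
  have hfirst : da * δ ≤ Δ_[1] f 0 := by
    simp only [f, fwdDiff_comp_arithProg, Nat.cast_zero, zero_mul, add_zero]
    exact hconv.mul_le_fwdDiff_of_hasDerivWithinAt ha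
      (by simpa only [Nat.cast_one, one_mul] using hmem 1 (by omega)) hδ hda
  have hlast : Δ_[1] f (2 * m - 1) ≤ db * δ := by
    have hb' : a + ((2 * m - 1 : ℕ) : ℝ) * δ + δ = b := by
      rw [← hend, Nat.cast_sub (by omega)]; ring
    rw [fwdDiff_comp_arithProg]
    exact hconv.fwdDiff_le_mul_of_hasDerivWithinAt (hmem _ (by omega)) (hb' ▸ hb) hδ
      (hb' ▸ hdb)
  have hhi := sum_range_pair_sub_le hmono
  exact ⟨sum_range_pair_sub_nonneg hmono, by linarith⟩

theorem alternating_sum_convex_general (a b : ℝ) (hab : a ≤ b) (h h' : ℝ → ℝ)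
    (hconv : ConvexOn ℝ (Set.Icc a b) h)
    (hd : ∀ x ∈ Set.Icc a b, HasDerivWithinAt h (h' x) (Set.Icc a b) x)
    (N : ℕ) (hN : 0 < N) (hNe : Even N) :
    |(∑ j ∈ Finset.range (N + 1), (-1 : ℝ) ^ j * h (a + j * ((b - a) / N)))
        - (h a + h b) / 2|
      ≤ ((b - a) / N) * sSup ((fun x => |h' x|) '' Set.Icc a b) := by
  obtain ⟨m, rfl⟩ := hNe.two_dvd
  set δ := (b - a) / ((2 * m : ℕ) : ℝ)
  set M := sSup ((fun x => |h' x|) '' Set.Icc a b)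
  have hδ : 0 ≤ δ := div_nonneg (sub_nonneg.2 hab) (Nat.cast_nonneg _)
  have hend : a + ((2 * m : ℕ) : ℝ) * δ = b := add_natCast_mul_div_natCast_self hN.ne'
  have ha := Set.left_mem_Icc.2 hab
  have hb := Set.right_mem_Icc.2 hab
  have hpairs := hconv.sum_range_pair_fwdDiff_mem_Icc (hd a ha) (hd b hb) hδ (by omega) hend
  have hbdd := (hconv.monotoneOn_of_hasDerivWithinAt hd).bddAbove_abs_image_Icc
  have hspread : (h' b - h' a) * δ ≤ 2 * (δ * M) := by
    have : h' b - h' a ≤ 2 * M := by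
      linarith [le_abs_self (h' b), neg_abs_le (h' a), le_csSup hbdd ⟨a, ha, rfl⟩,
        le_csSup hbdd ⟨b, hb, rfl⟩]
    linarith [mul_le_mul_of_nonneg_right this hδ]
  have hid := two_mul_sum_range_alternating (fun j : ℕ => h (a + j * δ)) m
  simp only [Nat.cast_zero, zero_mul, add_zero, hend] at hid
  rw [abs_le]
  constructor <;> linarith [hpairs.1, hpairs.2]

/-- Alternating sum estimate for a convex `C¹` function along an arithmetic progression:
with `δ = (b-a)/N` and `x_j = a + jδ`, `N` even,
`|Σ_{j=0}^N (−1)^j h(x_j) − (h(a) + h(b))/2| ≤ δ · sup_{[a,b]} |h'|`. -/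
theorem alternating_sum_convex (a b : ℝ) (hab : a ≤ b) (h h' : ℝ → ℝ)
    (hconv : ConvexOn ℝ (Set.Icc a b) h)
    (hd : ∀ x ∈ Set.Icc a b, HasDerivWithinAt h (h' x) (Set.Icc a b) x)
    (hc : ContinuousOn h' (Set.Icc a b))
    (N : ℕ) (hN : 0 < N) (hNe : Even N) :
    |(∑ j ∈ Finset.range (N + 1), (-1 : ℝ) ^ j * h (a + j * ((b - a) / N)))
        - (h a + h b) / 2|
      ≤ ((b - a) / N) * sSup ((fun x => |h' x|) '' Set.Icc a b) :=
  alternating_sum_convex_general a b hab h h' hconv hd N hN hNe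
end

section
/- Let P ⊂ ℝⁿ be an integer polytope. There exists a constant C depending only on n and P such that for every positive integer k, the number of lattice points p ∈ (1/k)ℤⁿ whose box □_k(p) = [p₁, p₁ + 1/k] × ⋯ × [pₙ, pₙ + 1/k] intersects the boundary ∂P of P is at most C·k^{n−1}. In particular, the set F_k of face points of P (those p ∈ P̄ ∩ (1/k)ℤⁿ with □_k(p) ⊄ P̄ and □_k(p) ∩ P̄ ≠ {p}) has at most C·k^{n−1} elements. -/
open Set

noncomputable section

/-- An integer polytope in `ℝⁿ`: the convex hull of a finite set of points with
integer coordinates (the set `Pbar` is the closed polytope `P̄`). -/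
def IsIntegerPolytope (n : ℕ) (Pbar : Set (Fin n → ℝ)) : Prop :=
  ∃ V : Finset (Fin n → ℝ), (∀ v ∈ V, ∀ i, ∃ z : ℤ, v i = (z : ℝ)) ∧
    Pbar = convexHull ℝ (V : Set (Fin n → ℝ))

/-- `p` belongs to the rescaled lattice `(1/k)ℤⁿ`. -/
def LatticePt (n k : ℕ) (p : Fin n → ℝ) : Prop :=
  ∀ i, ∃ z : ℤ, p i = (z : ℝ) / k

/-- The box `□_k(p) = [p₁, p₁ + 1/k] × ⋯ × [pₙ, pₙ + 1/k]` with corner point `p`. -/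
def latticeBox (n k : ℕ) (p : Fin n → ℝ) : Set (Fin n → ℝ) :=
  Set.Icc p (fun i => p i + 1 / k)

/-- The face lattice points
`F_k = {p ∈ P̄ ∩ (1/k)ℤⁿ : □_k(p) ⊄ P̄ and □_k(p) ∩ P̄ ≠ {p}}`. -/
def facePts (n k : ℕ) (Pbar : Set (Fin n → ℝ)) : Set (Fin n → ℝ) :=
  {p : Fin n → ℝ | p ∈ Pbar ∧ LatticePt n k p ∧
    ¬ latticeBox n k p ⊆ Pbar ∧ latticeBox n k p ∩ Pbar ≠ {p}}

/-!
Fix a ball `closedBall x₀ r ⊆ P̄`. By convexity, a point within `s r` of `P̄` lies in the homothetic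
copy `x₀ + (1 + s)(P̄ - x₀)`, while a point of `x₀ + (1 - s)(P̄ - x₀)` has its whole `s r`-ball in
`P̄` and so stays `s r` away from `∂P`. Hence the `s r`-neighbourhood of `∂P` has volume at most
`((1 + s)ⁿ - (1 - s)ⁿ) vol P̄ = O(s)`. The half-open cells of the boxes meeting `∂P` are disjoint,
have volume `k⁻ⁿ` and lie in the `2/k`-neighbourhood of `∂P`, so there are `O(kⁿ⁻¹)` of them.
The box of a face point is connected and meets both `P̄` and its complement, so it meets `∂P`.
-/

open Metric MeasureTheory
open scoped ENNReal

theorem one_add_pow_sub_one_sub_pow_le (d : ℕ) {s : ℝ} (hs₀ : 0 ≤ s) (hs₁ : s ≤ 1) :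
    (1 + s) ^ d - (1 - s) ^ d ≤ 2 * s * d * 2 ^ (d - 1) := calc
  _ ≤ |(1 + s) - (1 - s)| * d * max |1 + s| |1 - s| ^ (d - 1) :=
    (le_abs_self _).trans (abs_pow_sub_pow_le ..)
  _ ≤ 2 * s * d * 2 ^ (d - 1) := by
    rw [show (1 + s) - (1 - s) = 2 * s by ring, abs_of_nonneg (by positivity)]
    gcongr
    exact max_le (abs_le.2 ⟨by linarith, by linarith⟩) (abs_le.2 ⟨by linarith, by linarith⟩)

namespace Convex

variable {E : Type*} [NormedAddCommGroup E] [NormedSpace ℝ E] {K : Set E} {x₀ : E} {r s : ℝ}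

theorem mem_image_homothety_of_dist_le (hK : Convex ℝ K) (hball : closedBall x₀ r ⊆ K)
    (hs : 0 < s) {x y : E} (hy : y ∈ K) (hxy : dist x y ≤ s * r) :
    x ∈ AffineMap.homothety x₀ (1 + s) '' K := by
  have hw : x₀ + s⁻¹ • (x - y) ∈ K := hball <| by
    rw [mem_closedBall, dist_eq_norm, add_sub_cancel_left, norm_smul, Real.norm_eq_abs,
      abs_inv, abs_of_pos hs, ← dist_eq_norm, inv_mul_le_iff₀ hs]
    exact hxy
  refine ⟨AffineMap.homothety x₀ (1 + s)⁻¹ x, ?_, ?_⟩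
  · -- `x₀ + (1+s)⁻¹ (x - x₀)` is the convex combination `(1+s)⁻¹ y + s (1+s)⁻¹ (x₀ + s⁻¹ (x - y))`
    convert hK hy hw (show 0 ≤ (1 + s)⁻¹ by positivity) (show 0 ≤ s / (1 + s) by positivity)
      (by field_simp) using 1
    rw [AffineMap.homothety_apply, vsub_eq_sub, vadd_eq_add]
    match_scalars <;> field_simp <;> ring
  · rw [← AffineMap.homothety_mul_apply, mul_inv_cancel₀ (by positivity),
      AffineMap.homothety_one, AffineMap.id_apply]

theorem closedBall_subset_of_mem_image_homothety (hK : Convex ℝ K)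
    (hball : closedBall x₀ r ⊆ K) (hs₀ : 0 < s) (hs₁ : s ≤ 1) {x : E}
    (hx : x ∈ AffineMap.homothety x₀ (1 - s) '' K) : closedBall x (s * r) ⊆ K := by
  obtain ⟨z, hz, rfl⟩ := hx
  intro w hw
  have hu : x₀ + s⁻¹ • (w - AffineMap.homothety x₀ (1 - s) z) ∈ K := hball <| by
    rw [mem_closedBall, dist_eq_norm, add_sub_cancel_left, norm_smul, Real.norm_eq_abs,
      abs_inv, abs_of_pos hs₀, ← dist_eq_norm, inv_mul_le_iff₀ hs₀]
    exact hw
  convert hK hz hu (sub_nonneg.2 hs₁) hs₀.le (sub_add_cancel 1 s) using 1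
  rw [AffineMap.homothety_apply, vsub_eq_sub, vadd_eq_add]
  match_scalars <;> field_simp <;> ring

theorem thickening_frontier_subset (hK : Convex ℝ K) (hKc : IsClosed K)
    (hball : closedBall x₀ r ⊆ K) (hs₀ : 0 < s) (hs₁ : s ≤ 1) :
    Metric.thickening (s * r) (frontier K) ⊆
      AffineMap.homothety x₀ (1 + s) '' K \ AffineMap.homothety x₀ (1 - s) '' K := by
  rintro x hx
  obtain ⟨y, hy, hxy⟩ := mem_thickening_iff.1 hx
  refine ⟨hK.mem_image_homothety_of_dist_le hball hs₀ (hKc.frontier_subset hy) hxy.le,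
    fun hx' => hy.2 ?_⟩
  have hsub := hK.closedBall_subset_of_mem_image_homothety hball hs₀ hs₁ hx'
  exact interior_maximal (ball_subset_closedBall.trans hsub) isOpen_ball
    (mem_ball_comm.1 hxy)

variable [MeasurableSpace E] [BorelSpace E] [FiniteDimensional ℝ E] (μ : Measure E)
  [μ.IsAddHaarMeasure]

theorem measure_thickening_frontier_le (hK : Convex ℝ K) (hKc : IsCompact K)
    (hr : 0 ≤ r) (hball : closedBall x₀ r ⊆ K) (hs₀ : 0 < s) (hs₁ : s ≤ 1) :
    μ (Metric.thickening (s * r) (frontier K)) ≤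
      ENNReal.ofReal ((1 + s) ^ Module.finrank ℝ E - (1 - s) ^ Module.finrank ℝ E) * μ K := by
  have hinner : AffineMap.homothety x₀ (1 - s) '' K ⊆ AffineMap.homothety x₀ (1 + s) '' K :=
    fun x hx => hK.mem_image_homothety_of_dist_le hball hs₀
      (hK.closedBall_subset_of_mem_image_homothety hball hs₀ hs₁ hx
        (mem_closedBall_self (by positivity)))
      (by rw [dist_self]; positivity)
  have hcpt : IsCompact (AffineMap.homothety x₀ (1 - s) '' K) :=
    hKc.image (AffineMap.homothety_continuous _ _)
  have hpow : 0 ≤ (1 - s) ^ Module.finrank ℝ E := pow_nonneg (sub_nonneg.2 hs₁) _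
  calc μ (Metric.thickening (s * r) (frontier K))
      ≤ μ (AffineMap.homothety x₀ (1 + s) '' K \ AffineMap.homothety x₀ (1 - s) '' K) :=
        measure_mono (hK.thickening_frontier_subset hKc.isClosed hball hs₀ hs₁)
    _ ≤ _ := by
      rw [measure_sdiff_le_iff_le_add hcpt.isClosed.measurableSet.nullMeasurableSet hinner
        hcpt.measure_ne_top, Measure.addHaar_image_homothety, Measure.addHaar_image_homothety,
        abs_of_nonneg (by positivity), abs_of_nonneg hpow, ← add_mul,
        ← ENNReal.ofReal_add hpow (sub_nonneg.2 (by gcongr; linarith))]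
      gcongr
      linarith

theorem exists_measure_thickening_frontier_le (hK : Convex ℝ K) (hKc : IsCompact K)
    (hint : (interior K).Nonempty) (R : ℝ) :
    ∃ C, 0 ≤ C ∧ ∀ δ, 0 < δ → δ ≤ R →
      μ (Metric.thickening δ (frontier K)) ≤ ENNReal.ofReal (C * δ) := by
  obtain ⟨x₀, hx₀⟩ := hint
  obtain ⟨r, hr, hball⟩ := nhds_basis_closedBall.mem_iff.1 (mem_interior_iff_mem_nhds.1 hx₀)
  set d := Module.finrank ℝ E
  set V := (μ K).toReal
  set M := (μ (Metric.thickening R K)).toReal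
  have hV : μ K = ENNReal.ofReal V := (ENNReal.ofReal_toReal hKc.measure_ne_top).symm
  refine ⟨(2 * d * 2 ^ (d - 1) * V + M) / r, by positivity, fun δ hδ hδR => ?_⟩
  -- thin shells by the homothety estimate with `s = δ / r`; for `r < δ ≤ R` a constant bound is `O(δ)`
  rcases le_or_gt δ r with hδr | hrδ
  · set s := δ / r
    have hs₀ : 0 < s := by positivity
    have hs₁ : s ≤ 1 := (div_le_one hr).2 hδr
    calc μ (Metric.thickening δ (frontier K))
        = μ (Metric.thickening (s * r) (frontier K)) := by rw [div_mul_cancel₀ δ hr.ne']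
      _ ≤ ENNReal.ofReal ((1 + s) ^ d - (1 - s) ^ d) * μ K :=
        measure_thickening_frontier_le μ hK hKc hr.le hball hs₀ hs₁
      _ ≤ ENNReal.ofReal (2 * s * d * 2 ^ (d - 1) * V) := by
        rw [hV, ← ENNReal.ofReal_mul' ENNReal.toReal_nonneg]
        gcongr
        exact one_add_pow_sub_one_sub_pow_le d hs₀.le hs₁
      _ ≤ ENNReal.ofReal ((2 * d * 2 ^ (d - 1) * V + M) / r * δ) := by
        apply ENNReal.ofReal_le_ofReal
        rw [div_mul_comm]
        nlinarith [show 0 ≤ s * M by positivity]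
  · calc μ (Metric.thickening δ (frontier K))
        ≤ μ (Metric.thickening R K) :=
          measure_mono ((thickening_mono hδR _).trans
            (thickening_subset_of_subset R hKc.isClosed.frontier_subset))
      _ = ENNReal.ofReal M :=
          (ENNReal.ofReal_toReal hKc.isBounded.thickening.measure_lt_top.ne).symm
      _ ≤ ENNReal.ofReal ((2 * d * 2 ^ (d - 1) * V + M) / r * δ) := by
        apply ENNReal.ofReal_le_ofReal
        rw [div_mul_comm]
        have hA : 0 ≤ 2 * d * 2 ^ (d - 1) * V := by positivity
        nlinarith [mul_le_mul_of_nonneg_right ((one_le_div hr).2 hrδ.le)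
          (add_nonneg hA ENNReal.toReal_nonneg : 0 ≤ 2 * d * 2 ^ (d - 1) * V + M)]

end Convex

theorem IsPreconnected.inter_frontier_nonempty {α : Type*} [TopologicalSpace α] {s t : Set α}
    (hs : IsPreconnected s) (hst : (s ∩ t).Nonempty) (hst' : (s \ t).Nonempty) :
    (s ∩ frontier t).Nonempty := by
  by_contra h
  have hint : ∀ x ∈ s, x ∈ closure t → x ∈ interior t :=
    fun x hx hxc => not_not.1 fun hxi => h ⟨x, hx, hxc, hxi⟩
  obtain ⟨x, hxs, hxt⟩ := hst
  have hsub : s ⊆ interior t :=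
    hs.subset_of_closure_inter_subset isOpen_interior ⟨x, hxs, hint x hxs (subset_closure hxt)⟩
      fun y ⟨hyc, hys⟩ => hint y hys (closure_mono interior_subset hyc)
  obtain ⟨y, hys, hyt⟩ := hst'
  exact hyt (interior_subset (hsub hys))

theorem Set.ncard_le_of_forall_finset_card_le {α : Type*} {S : Set α} {N : ℝ} (hN : 0 ≤ N)
    (h : ∀ F : Finset α, ↑F ⊆ S → (F.card : ℝ) ≤ N) : (S.ncard : ℝ) ≤ N := by
  rcases S.finite_or_infinite with hS | hS
  · rw [ncard_eq_toFinset_card S hS]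
    exact h _ hS.coe_toFinset.subset
  · rwa [hS.ncard, Nat.cast_zero]

section Lattice

variable {n k : ℕ}

def latticePtsMeeting (n k : ℕ) (T : Set (Fin n → ℝ)) : Set (Fin n → ℝ) :=
  {p | LatticePt n k p ∧ (latticeBox n k p ∩ T).Nonempty}

def latticeCell (n k : ℕ) (p : Fin n → ℝ) : Set (Fin n → ℝ) :=
  univ.pi fun i => Ico (p i) (p i + 1 / k)

theorem latticeCell_subset_latticeBox (p : Fin n → ℝ) : latticeCell n k p ⊆ latticeBox n k p :=
  fun _ hx => ⟨fun i => (hx i trivial).1, fun i => (hx i trivial).2.le⟩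

theorem volume_latticeCell (p : Fin n → ℝ) :
    volume (latticeCell n k p) = ENNReal.ofReal ((1 / k) ^ n) := by
  simp only [latticeCell, Real.volume_pi_Ico, add_sub_cancel_left, Finset.prod_const,
    Finset.card_univ, Fintype.card_fin, ENNReal.ofReal_pow (by positivity : (0 : ℝ) ≤ 1 / k)]

theorem dist_le_of_mem_latticeBox {p x y : Fin n → ℝ} (hx : x ∈ latticeBox n k p)
    (hy : y ∈ latticeBox n k p) : dist x y ≤ 1 / k :=
  (Real.dist_le_of_mem_pi_Icc hx hy).trans <| (dist_pi_le_iff (by positivity)).2 fun i => by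
    simp

theorem eq_of_mem_latticeCell (hk : 0 < k) {p q x : Fin n → ℝ} (hp : LatticePt n k p)
    (hq : LatticePt n k q) (hxp : x ∈ latticeCell n k p) (hxq : x ∈ latticeCell n k q) :
    p = q := by
  have hk' : (0 : ℝ) < k := Nat.cast_pos.2 hk
  -- a cell of `(1/k)ℤ` is recovered from any of its points as `⌊k x⌋ / k`
  have hfloor : ∀ {c : ℤ} {t : ℝ}, t ∈ Ico (c / k : ℝ) (c / k + 1 / k) → ⌊k * t⌋ = c := by
    intro c t ⟨h₁, h₂⟩
    rw [← add_div, lt_div_iff₀' hk'] at h₂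
    exact Int.floor_eq_iff.2 ⟨(div_le_iff₀' hk').1 h₁, h₂⟩
  funext i
  obtain ⟨a, ha⟩ := hp i
  obtain ⟨b, hb⟩ := hq i
  have hxa : x i ∈ Ico (p i) (p i + 1 / k) := hxp i trivial
  have hxb : x i ∈ Ico (q i) (q i + 1 / k) := hxq i trivial
  rw [ha] at hxa ⊢
  rw [hb] at hxb ⊢
  rw [← hfloor hxa, ← hfloor hxb]

theorem card_mul_le_volume_thickening (hk : 0 < k) {T : Set (Fin n → ℝ)}
    (F : Finset (Fin n → ℝ)) (hF : ↑F ⊆ latticePtsMeeting n k T) :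
    (F.card : ℝ≥0∞) * ENNReal.ofReal ((1 / k) ^ n) ≤ volume (thickening (2 / k) T) := by
  have hdisj : (F : Set (Fin n → ℝ)).PairwiseDisjoint (latticeCell n k) :=
    fun p hp q hq hpq => disjoint_left.2 fun _ hxp hxq =>
      hpq (eq_of_mem_latticeCell hk (hF hp).1 (hF hq).1 hxp hxq)
  calc (F.card : ℝ≥0∞) * ENNReal.ofReal ((1 / k) ^ n)
      = volume (⋃ p ∈ F, latticeCell n k p) := by
        rw [measure_biUnion_finset hdisj fun p _ =>
          MeasurableSet.univ_pi fun _ => measurableSet_Ico]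
        simp [volume_latticeCell]
    _ ≤ volume (thickening (2 / k) T) := by
      refine measure_mono (iUnion₂_subset fun p hp x hx => ?_)
      obtain ⟨y, hyb, hyT⟩ := (hF hp).2
      refine mem_thickening_iff.2 ⟨y, hyT, ?_⟩
      calc dist x y ≤ 1 / k := dist_le_of_mem_latticeBox (latticeCell_subset_latticeBox p hx) hyb
        _ < 2 / k := by gcongr; norm_num

theorem card_le_of_volume_thickening_le (hk : 0 < k) {T : Set (Fin n → ℝ)} {C : ℝ} (hC : 0 ≤ C)
    (hT : volume (thickening (2 / k) T) ≤ ENNReal.ofReal (C * (2 / k)))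
    (F : Finset (Fin n → ℝ)) (hF : ↑F ⊆ latticePtsMeeting n k T) :
    (F.card : ℝ) ≤ 2 * C * k ^ (n - 1) := by
  have hk' : (0 : ℝ) < k := Nat.cast_pos.2 hk
  have h := (card_mul_le_volume_thickening hk F hF).trans hT
  rw [← ENNReal.ofReal_natCast, ← ENNReal.ofReal_mul (Nat.cast_nonneg _),
    ENNReal.ofReal_le_ofReal_iff (by positivity)] at h
  have hpow : (k : ℝ) ^ n ≤ k ^ (n - 1) * k := by
    rw [← pow_succ]
    exact pow_le_pow_right₀ (Nat.one_le_cast.2 hk) (by omega)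
  calc (F.card : ℝ) = F.card * (1 / k) ^ n * k ^ n := by
        rw [mul_assoc, ← mul_pow, one_div_mul_cancel hk'.ne', one_pow, mul_one]
    _ ≤ C * (2 / k) * (k ^ (n - 1) * k) := by gcongr
    _ = 2 * C * k ^ (n - 1) := by field_simp

theorem facePts_subset_latticePtsMeeting_frontier (P : Set (Fin n → ℝ)) :
    facePts n k P ⊆ latticePtsMeeting n k (frontier P) := by
  rintro p ⟨hpP, hp, hnot, -⟩
  have hpbox : p ∈ latticeBox n k p := ⟨le_rfl, fun i => by simp⟩
  exact ⟨hp, (convex_Icc _ _).isPreconnected.inter_frontier_nonempty ⟨p, hpbox, hpP⟩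
    (not_subset.1 hnot)⟩

end Lattice

/-- The number of lattice boxes meeting the boundary `∂P` of an integer polytope is
`O(k^{n-1})`; in particular the set of face points `F_k` has at most `C k^{n-1}`
elements. -/
theorem boundary_box_count (n : ℕ) (Pbar : Set (Fin n → ℝ))
    (hP : IsIntegerPolytope n Pbar) (hfull : (interior Pbar).Nonempty) :
    ∃ C : ℝ, ∀ k : ℕ, 0 < k →
      (({p : Fin n → ℝ | LatticePt n k p ∧
          (latticeBox n k p ∩ frontier Pbar).Nonempty}.ncard : ℝ)
        ≤ C * (k : ℝ) ^ (n - 1)) ∧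
      ((facePts n k Pbar).ncard : ℝ) ≤ C * (k : ℝ) ^ (n - 1) := by
  obtain ⟨V, -, rfl⟩ := hP
  have hcompact : IsCompact (convexHull ℝ (V : Set (Fin n → ℝ))) :=
    V.finite_toSet.isCompact_convexHull (𝕜 := ℝ)
  obtain ⟨C, hC, hthick⟩ :=
    (convex_convexHull ℝ _).exists_measure_thickening_frontier_le volume hcompact hfull 2
  have hcount : ∀ k : ℕ, 0 < k → ∀ F : Finset (Fin n → ℝ),
      ↑F ⊆ latticePtsMeeting n k (frontier (convexHull ℝ ↑V)) →
      (F.card : ℝ) ≤ 2 * C * k ^ (n - 1) := fun k hk =>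
    card_le_of_volume_thickening_le hk hC <|
      hthick _ (by positivity) (div_le_self zero_le_two (Nat.one_le_cast.2 hk))
  refine ⟨2 * C, fun k hk => ⟨?_, ?_⟩⟩
  · exact ncard_le_of_forall_finset_card_le (by positivity) (hcount k hk)
  · exact ncard_le_of_forall_finset_card_le (by positivity)
      fun F hF => hcount k hk F (hF.trans (facePts_subset_latticePtsMeeting_frontier _))
end
end
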